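/- Fix an integer N ≥ 2 and a probability vector p on Fin r with r > 2, p i > 0 for all i, and p 0 ≥ p i for all i (so p 0 is the largest subset proportion). For an integer c ≥ 2, let R(p,c) = 1 - (N/(2·(N-1))) · VI₂(p, u_c) denote the Rand index between the ground truth and a statistically independent balanced candidate partition with c clusters, where u_c is the uniform probability vector on Fin c. If p 0 ≤ 1/2, then R(p,·) is strictly increasing in c, i.e., for all integers 2 ≤ c < c', R(p,c) < R(p,c'). -/

import Mathlib

/-- The quadratic entropy of a finitely supported probability vector. -/
noncomputable def quadEntropy {α : Type*} [Fintype α] (x : α → ℝ) : ℝ :=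
  2 * (1 - ∑ i, (x i) ^ 2)

/-- The quadratic variation of information between (the distributions of)
two statistically independent partitions. -/
noncomputable def VI2 {α β : Type*} [Fintype α] [Fintype β] (p : α → ℝ) (q : β → ℝ) : ℝ :=
  2 * quadEntropy (fun ij : α × β => p ij.1 * q ij.2) - quadEntropy p - quadEntropy q

/-- The uniform (balanced) probability vector on `Fin c`. -/
noncomputable def unif (c : ℕ) : Fin c → ℝ := fun _ => 1 / (c : ℝ)

/-- The (expected) Rand index between a ground-truth distribution `p` and a
statistically independent balanced candidate partition with `c` clusters. -/
noncomputable def randGT (N : ℕ) {r : ℕ} (p : Fin r → ℝ) (c : ℕ) : ℝ :=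
  1 - ((N : ℝ) / (2 * ((N : ℝ) - 1))) * VI2 p (unif c)

/-!
The Rand index against a balanced candidate is a decreasing affine function of `VI₂(p, u_c)`,
and with `S = ∑ pᵢ²` one computes `VI₂(p, u_c) = 2 (S + (1 - 2S)/c)`. This decreases strictly
in `c` exactly when `S < 1/2`, and `S ≤ max pᵢ ≤ 1/2`, with equality forcing `p` to be uniform
on two points, which `r > 2` rules out.
-/

section SumSq

variable {ι : Type*} [Fintype ι]

theorem sum_sq_le_mul_sum {p : ι → ℝ} {m : ℝ} (hp : ∀ i, 0 ≤ p i) (hm : ∀ i, p i ≤ m) :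
    ∑ i, p i ^ 2 ≤ m * ∑ i, p i := by
  rw [Finset.mul_sum]
  gcongr with i
  rw [sq]
  exact mul_le_mul_of_nonneg_right (hm i) (hp i)

theorem sum_sq_lt_mul_sum {p : ι → ℝ} {m : ℝ} (hp : ∀ i, 0 ≤ p i) (hm : ∀ i, p i ≤ m)
    {j : ι} (hpj : 0 < p j) (hj : p j < m) : ∑ i, p i ^ 2 < m * ∑ i, p i := by
  rw [Finset.mul_sum]
  refine Finset.sum_lt_sum (fun i _ => ?_) ⟨j, Finset.mem_univ j, ?_⟩
  · rw [sq]
    exact mul_le_mul_of_nonneg_right (hm i) (hp i)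
  · rw [sq]
    exact mul_lt_mul_of_pos_right hj hpj

theorem sum_sq_lt_half {p : ι → ℝ} {m : ℝ} (hcard : 2 < Fintype.card ι) (hp : ∀ i, 0 < p i)
    (hp1 : ∑ i, p i = 1) (hm : ∀ i, p i ≤ m) (hm_half : m ≤ 1 / 2) :
    ∑ i, p i ^ 2 < 1 / 2 := by
  by_cases hconst : ∀ i, p i = m
  · have hcard_mul : (Fintype.card ι : ℝ) * m = 1 := by
      simpa [hconst] using hp1
    have hcard3 : (3 : ℝ) ≤ Fintype.card ι := by exact_mod_cast hcard
    calc ∑ i, p i ^ 2 ≤ m * ∑ i, p i := sum_sq_le_mul_sum (fun i => (hp i).le) hm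
      _ = m := by rw [hp1, mul_one]
      _ < 1 / 2 := by nlinarith
  · push Not at hconst
    obtain ⟨j, hj⟩ := hconst
    calc ∑ i, p i ^ 2 < m * ∑ i, p i :=
          sum_sq_lt_mul_sum (fun i => (hp i).le) hm (hp j) (lt_of_le_of_ne (hm j) hj)
      _ = m := by rw [hp1, mul_one]
      _ ≤ 1 / 2 := hm_half

end SumSq

theorem quadEntropy_prod {α β : Type*} [Fintype α] [Fintype β] (p : α → ℝ) (q : β → ℝ) :
    quadEntropy (fun ij : α × β => p ij.1 * q ij.2) =
      2 * (1 - (∑ i, p i ^ 2) * ∑ j, q j ^ 2) := by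
  simp only [quadEntropy, mul_pow, Fintype.sum_prod_type, Finset.sum_mul_sum]

theorem VI2_eq {α β : Type*} [Fintype α] [Fintype β] (p : α → ℝ) (q : β → ℝ) :
    VI2 p q = 2 * ((∑ i, p i ^ 2) + (∑ j, q j ^ 2) - 2 * (∑ i, p i ^ 2) * ∑ j, q j ^ 2) := by
  rw [VI2, quadEntropy_prod, quadEntropy, quadEntropy]
  ring

theorem sum_sq_unif (c : ℕ) : ∑ j, unif c j ^ 2 = 1 / c := by
  rcases eq_or_ne (c : ℝ) 0 with hc | hc
  · simp [unif, hc]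
  · simp only [unif, Finset.sum_const, Finset.card_univ, Fintype.card_fin, nsmul_eq_mul]
    field_simp

theorem VI2_unif {α : Type*} [Fintype α] (p : α → ℝ) (c : ℕ) :
    VI2 p (unif c) = 2 * ((∑ i, p i ^ 2) + (1 - 2 * ∑ i, p i ^ 2) / c) := by
  rw [VI2_eq, sum_sq_unif]
  ring

theorem VI2_unif_lt_of_lt {α : Type*} [Fintype α] {p : α → ℝ} (hp : ∑ i, p i ^ 2 < 1 / 2)
    {c c' : ℕ} (hc : 0 < c) (hcc' : c < c') : VI2 p (unif c') < VI2 p (unif c) := by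
  rw [VI2_unif, VI2_unif]
  have hc_pos : (0 : ℝ) < c := by exact_mod_cast hc
  have hcc'_real : (c : ℝ) < c' := by exact_mod_cast hcc'
  gcongr
  linarith

theorem randGT_lt_randGT_iff {N r : ℕ} (hN : 2 ≤ N) (p : Fin r → ℝ) (c c' : ℕ) :
    randGT N p c < randGT N p c' ↔ VI2 p (unif c') < VI2 p (unif c) := by
  have hN_real : (2 : ℝ) ≤ N := by exact_mod_cast hN
  have hK : 0 < (N : ℝ) / (2 * ((N : ℝ) - 1)) := by
    apply div_pos <;> linarith
  rw [randGT, randGT, sub_lt_sub_iff_left, mul_lt_mul_iff_right₀ hK]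

theorem randGT_inc_of_no_dominant_cluster {N r : ℕ} [NeZero r] (hN : 2 ≤ N) (hr : 2 < r)
    (p : Fin r → ℝ) (hp : ∀ i, 0 < p i) (hp1 : ∑ i, p i = 1)
    (hmax : ∀ i, p i ≤ p 0) (h0 : p 0 ≤ 1 / 2) :
    ∀ c c' : ℕ, 2 ≤ c → c < c' → randGT N p c < randGT N p c' := by
  intro c c' hc hcc'
  have hS : ∑ i, p i ^ 2 < 1 / 2 :=
    sum_sq_lt_half (by rwa [Fintype.card_fin]) hp hp1 hmax h0
  exact (randGT_lt_randGT_iff hN p c c').2 (VI2_unif_lt_of_lt hS (by omega) hcc')
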